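/- Let H be a complex Hilbert space, n ≥ 1, and let η, ξ₁, …, ξₙ ∈ H be unit vectors such that |⟨ξᵢ, ξⱼ⟩| ≤ ε for all 1 ≤ i < j ≤ n and ⟨η, ξᵢ⟩ = ⟨η, ξⱼ⟩ for all 1 ≤ i, j ≤ n. If 0 ≤ ε ≤ 1/(2n), then |⟨η, ξᵢ⟩|² ≤ 1/n + 8nε for every 1 ≤ i ≤ n. -/

import Mathlib

/-!
Let `s = ∑ ξⱼ` and `c = ⟨η, ξᵢ⟩`. Since all `⟨η, ξⱼ⟩` equal `c`, Cauchy–Schwarz gives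
`n ‖c‖ ≤ ‖s‖`, while expanding `‖s‖²` into the `n` diagonal terms `1` and the `n (n - 1)`
off-diagonal terms of size at most `ε` gives `‖s‖² ≤ n + n (n - 1) ε`. Hence
`‖c‖² ≤ 1/n + (n - 1) ε / n`, which is below `1/n + 8 n ε`.
-/

open Finset

section
variable {𝕜 E ι : Type*} [RCLike 𝕜] [NormedAddCommGroup E] [InnerProductSpace 𝕜 E] [Fintype ι]

lemma norm_sum_sq_le_of_norm_inner_le (v : ι → E) {ε : ℝ} (hv : ∀ i, ‖v i‖ = 1)
    (hε : ∀ i j, i ≠ j → ‖(inner 𝕜 (v i) (v j) : 𝕜)‖ ≤ ε) :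
    ‖∑ i, v i‖ ^ 2 ≤ Fintype.card ι + Fintype.card ι * (Fintype.card ι - 1) * ε := by
  classical
  have hterm : ∀ i j, RCLike.re (inner 𝕜 (v i) (v j) : 𝕜) ≤ ε + if i = j then 1 - ε else 0 := by
    intro i j
    by_cases hij : i = j
    · subst hij
      simp [hv]
    · simpa [hij] using (RCLike.re_le_norm _).trans (hε i j hij)
  calc ‖∑ i, v i‖ ^ 2 = ∑ i, ∑ j, RCLike.re (inner 𝕜 (v i) (v j) : 𝕜) := by
        rw [← inner_self_eq_norm_sq (𝕜 := 𝕜), sum_inner]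
        simp only [inner_sum, map_sum]
    _ ≤ ∑ i : ι, ∑ j : ι, (ε + if i = j then 1 - ε else 0) :=
        sum_le_sum fun i _ => sum_le_sum fun j _ => hterm i j
    _ = Fintype.card ι + Fintype.card ι * (Fintype.card ι - 1) * ε := by
        simp only [sum_add_distrib, sum_ite_eq, mem_univ, if_true, sum_const, card_univ,
          nsmul_eq_mul]
        ring

lemma card_mul_norm_le_of_inner_eq (η : E) (v : ι → E) {c : 𝕜}
    (hc : ∀ i, (inner 𝕜 η (v i) : 𝕜) = c) :
    Fintype.card ι * ‖c‖ ≤ ‖η‖ * ‖∑ i, v i‖ := by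
  have hsum : (inner 𝕜 η (∑ i, v i) : 𝕜) = Fintype.card ι * c := by
    simp [inner_sum, hc]
  simpa [hsum] using norm_inner_le_norm (𝕜 := 𝕜) η (∑ i, v i)

end

theorem almost_orthogonal_vectors_bound_general
    {H : Type*} [NormedAddCommGroup H] [InnerProductSpace ℂ H]
    (n : ℕ) (ε : ℝ)
    (η : H) (ξ : Fin n → H)
    (hη : ‖η‖ = 1) (hξ : ∀ i, ‖ξ i‖ = 1)
    (horth : ∀ i j : Fin n, i < j → ‖(inner ℂ (ξ i) (ξ j) : ℂ)‖ ≤ ε)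
    (heq : ∀ i j : Fin n, (inner ℂ η (ξ i) : ℂ) = (inner ℂ η (ξ j) : ℂ))
    (hε0 : 0 ≤ ε) :
    ∀ i : Fin n, ‖(inner ℂ η (ξ i) : ℂ)‖ ^ 2 ≤ 1 / n + 8 * n * ε := by
  intro i
  set c : ℂ := inner ℂ η (ξ i)
  have hne : ∀ a b : Fin n, a ≠ b → ‖(inner ℂ (ξ a) (ξ b) : ℂ)‖ ≤ ε := by
    intro a b hab
    rcases hab.lt_or_gt with h | h
    · exact horth a b h
    · rw [norm_inner_symm]
      exact horth b a h
  have hsum := norm_sum_sq_le_of_norm_inner_le ξ hξ hne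
  have hc := card_mul_norm_le_of_inner_eq η ξ fun j => heq j i
  simp only [Fintype.card_fin, hη, one_mul] at hsum hc
  have hn : (1 : ℝ) ≤ n := by exact_mod_cast i.pos
  have key : n * (n * ‖c‖ ^ 2) ≤ n * (1 + (n - 1) * ε) := by
    nlinarith [pow_le_pow_left₀ (by positivity) hc 2]
  have hcn := le_of_mul_le_mul_left key (by positivity)
  rw [div_add' _ _ _ (by positivity), le_div_iff₀ (by positivity)]
  nlinarith [mul_nonneg hε0 (mul_nonneg (sub_nonneg.mpr hn) (sub_nonneg.mpr hn))]

theorem almost_orthogonal_vectors_bound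
    {H : Type*} [NormedAddCommGroup H] [InnerProductSpace ℂ H]
    (n : ℕ) (hn : 1 ≤ n) (ε : ℝ)
    (η : H) (ξ : Fin n → H)
    (hη : ‖η‖ = 1) (hξ : ∀ i, ‖ξ i‖ = 1)
    (horth : ∀ i j : Fin n, i < j → ‖(inner ℂ (ξ i) (ξ j) : ℂ)‖ ≤ ε)
    (heq : ∀ i j : Fin n, (inner ℂ η (ξ i) : ℂ) = (inner ℂ η (ξ j) : ℂ))
    (hε0 : 0 ≤ ε) (hε : ε ≤ 1 / (2 * n)) :
    ∀ i : Fin n, ‖(inner ℂ η (ξ i) : ℂ)‖ ^ 2 ≤ 1 / n + 8 * n * ε :=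
  almost_orthogonal_vectors_bound_general n ε η ξ hη hξ horth heq hε0
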